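/- arXiv:math/0210097 — 2 statements merged into one kernel-verified Lean document; each statement's English description precedes it below -/
import Mathlib

section
/- If R is a commutative Noetherian ring, M is a Gorenstein injective R-module, and T is a finitely generated R-module of finite projective dimension, then Ext^i_R(T, M) = 0 for all i > 0. -/
universe u
open CategoryTheory
noncomputable section

variable (R : Type u) [CommRing R]

/-- A complete injective resolution: an acyclic cochain complex of injective `R`-modules
which stays acyclic after applying `Hom_R(J, -)` for every injective `R`-module `J`. -/
structure CompleteInjectiveResolution where
  X : ℤ → Type u
  [acg : ∀ n, AddCommGroup (X n)]
  [mod : ∀ n, Module R (X n)]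
  d : ∀ n : ℤ, X n →ₗ[R] X (n + 1)
  injective : ∀ n, Module.Injective R (X n)
  exact : ∀ n, Function.Exact (d n) (d (n + 1))
  homExact : ∀ (J : Type u) [AddCommGroup J] [Module R J], Module.Injective R J →
    ∀ n, Function.Exact
      (LinearMap.llcomp (σ₁₂ := RingHom.id R) (σ₁₃ := RingHom.id R) R J (X n) (X (n + 1)) (d n))
      (LinearMap.llcomp (σ₁₂ := RingHom.id R) (σ₁₃ := RingHom.id R) R J (X (n + 1)) (X (n + 1 + 1)) (d (n + 1)))

attribute [instance] CompleteInjectiveResolution.acg CompleteInjectiveResolution.mod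

/-- `M` is Gorenstein injective if it is the kernel of the degree-zero differential of a
complete injective resolution. -/
def IsGorensteinInjective (M : Type u) [AddCommGroup M] [Module R M] : Prop :=
  ∃ C : CompleteInjectiveResolution R, Nonempty (M ≃ₗ[R] LinearMap.ker (C.d 0))

/-- A complete projective resolution: an acyclic chain complex of projective `R`-modules
which stays acyclic after applying `Hom_R(-, Q)` for every projective `R`-module `Q`. -/
structure CompleteProjectiveResolution where
  X : ℤ → Type u
  [acg : ∀ n, AddCommGroup (X n)]
  [mod : ∀ n, Module R (X n)]
  d : ∀ n : ℤ, X (n + 1) →ₗ[R] X n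
  projective : ∀ n, Module.Projective R (X n)
  exact : ∀ n, Function.Exact (d (n + 1)) (d n)
  homExact : ∀ (Q : Type u) [AddCommGroup Q] [Module R Q], Module.Projective R Q →
    ∀ n, Function.Exact
      (LinearMap.lcomp R Q (d n))
      (LinearMap.lcomp R Q (d (n + 1)))

attribute [instance] CompleteProjectiveResolution.acg CompleteProjectiveResolution.mod

/-- `M` is Gorenstein projective if it is the cokernel of the differential into degree zero of a
complete projective resolution. -/
def IsGorensteinProjective (M : Type u) [AddCommGroup M] [Module R M] : Prop :=
  ∃ C : CompleteProjectiveResolution R,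
    Nonempty (M ≃ₗ[R] ((C.X 0) ⧸ LinearMap.range (C.d 0)))

/-- A complete flat resolution: an acyclic chain complex of flat `R`-modules which stays
acyclic after applying `J ⊗_R -` for every injective `R`-module `J`. -/
structure CompleteFlatResolution where
  X : ℤ → Type u
  [acg : ∀ n, AddCommGroup (X n)]
  [mod : ∀ n, Module R (X n)]
  d : ∀ n : ℤ, X (n + 1) →ₗ[R] X n
  flat : ∀ n, Module.Flat R (X n)
  exact : ∀ n, Function.Exact (d (n + 1)) (d n)
  tensorExact : ∀ (J : Type u) [AddCommGroup J] [Module R J], Module.Injective R J →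
    ∀ n, Function.Exact
      (LinearMap.lTensor J (d (n + 1)))
      (LinearMap.lTensor J (d n))

attribute [instance] CompleteFlatResolution.acg CompleteFlatResolution.mod

/-- `M` is Gorenstein flat if it is a cokernel at degree zero of a complete flat resolution. -/
def IsGorensteinFlat (M : Type u) [AddCommGroup M] [Module R M] : Prop :=
  ∃ C : CompleteFlatResolution R,
    Nonempty (M ≃ₗ[R] ((C.X 0) ⧸ LinearMap.range (C.d 0)))

/-- The `i`-th Ext group of `R`-modules. -/
abbrev ExtGrp (i : ℕ) (M N : Type u) [AddCommGroup M] [Module R M]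
    [AddCommGroup N] [Module R N] :=
  ((Ext R (ModuleCat.{u} R) i).obj (Opposite.op (ModuleCat.of R M))).obj (ModuleCat.of R N)

/-- The `i`-th Tor group of `R`-modules. -/
abbrev TorGrp (i : ℕ) (M N : Type u) [AddCommGroup M] [Module R M]
    [AddCommGroup N] [Module R N] :=
  ((Tor (ModuleCat.{u} R) i).obj (ModuleCat.of R M)).obj (ModuleCat.of R N)

/-- An exact sequence `0 → M → H 0 → ⋯ → H n → 0` with all terms satisfying `P`
(the terms beyond degree `n` are zero). -/
structure RightResolution (M : Type u) [AddCommGroup M] [Module R M]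
    (P : ∀ (N : Type u) [AddCommGroup N] [Module R N], Prop) (n : ℕ) where
  H : ℕ → Type u
  [acg : ∀ i, AddCommGroup (H i)]
  [mod : ∀ i, Module R (H i)]
  e : M →ₗ[R] H 0
  d : ∀ i : ℕ, H i →ₗ[R] H (i + 1)
  e_inj : Function.Injective e
  exact0 : Function.Exact e (d 0)
  exact : ∀ i, Function.Exact (d i) (d (i + 1))
  prop : ∀ i ≤ n, P (H i)
  triv : ∀ i, n < i → Subsingleton (H i)

attribute [instance] RightResolution.acg RightResolution.mod

/-- An exact sequence `0 → H n → ⋯ → H 0 → M → 0` with all terms satisfying `P`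
(the terms beyond degree `n` are zero). -/
structure LeftResolution (M : Type u) [AddCommGroup M] [Module R M]
    (P : ∀ (N : Type u) [AddCommGroup N] [Module R N], Prop) (n : ℕ) where
  H : ℕ → Type u
  [acg : ∀ i, AddCommGroup (H i)]
  [mod : ∀ i, Module R (H i)]
  e : H 0 →ₗ[R] M
  d : ∀ i : ℕ, H (i + 1) →ₗ[R] H i
  e_surj : Function.Surjective e
  exact0 : Function.Exact (d 0) e
  exact : ∀ i, Function.Exact (d (i + 1)) (d i)
  prop : ∀ i ≤ n, P (H i)
  triv : ∀ i, n < i → Subsingleton (H i)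

attribute [instance] LeftResolution.acg LeftResolution.mod

/-- Injective dimension at most `n`. -/
def HasIdLE (M : Type u) [AddCommGroup M] [Module R M] (n : ℕ) : Prop :=
  Nonempty (RightResolution R M (fun N _ _ => Module.Injective R N) n)

/-- Injective dimension exactly `n`. -/
def HasIdEq (M : Type u) [AddCommGroup M] [Module R M] (n : ℕ) : Prop :=
  HasIdLE R M n ∧ ∀ m < n, ¬ HasIdLE R M m

/-- Projective dimension at most `n`. -/
def HasPdLE (M : Type u) [AddCommGroup M] [Module R M] (n : ℕ) : Prop :=
  Nonempty (LeftResolution R M (fun N _ _ => Module.Projective R N) n)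

/-- Projective dimension exactly `n`. -/
def HasPdEq (M : Type u) [AddCommGroup M] [Module R M] (n : ℕ) : Prop :=
  HasPdLE R M n ∧ ∀ m < n, ¬ HasPdLE R M m

/-- Flat dimension at most `n`. -/
def HasFdLE (M : Type u) [AddCommGroup M] [Module R M] (n : ℕ) : Prop :=
  Nonempty (LeftResolution R M (fun N _ _ => Module.Flat R N) n)

/-- Finite projective dimension. -/
def HasFinitePd (M : Type u) [AddCommGroup M] [Module R M] : Prop :=
  ∃ n, HasPdLE R M n

/-- Gorenstein injective dimension at most `n`. -/
def HasGidLE (M : Type u) [AddCommGroup M] [Module R M] (n : ℕ) : Prop :=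
  Nonempty (RightResolution R M (fun N _ _ => IsGorensteinInjective R N) n)

/-- Gorenstein injective dimension exactly `n`. -/
def HasGidEq (M : Type u) [AddCommGroup M] [Module R M] (n : ℕ) : Prop :=
  HasGidLE R M n ∧ ∀ m < n, ¬ HasGidLE R M m

/-- The small restricted covariant Ext-dimension of `M` equals `n`: `Ext^n_R(T, M) ≠ 0` for
some finitely generated `T` of finite projective dimension, while `Ext^i_R(T, M) = 0` for all
`i > n` and all such `T`. -/
def RidEq (M : Type u) [AddCommGroup M] [Module R M] (n : ℕ) : Prop :=
  (∃ T : ModuleCat.{u} R, Module.Finite R T ∧ HasFinitePd R T ∧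
    ¬ Subsingleton (ExtGrp R n T M)) ∧
  ∀ i, n < i → ∀ (T : Type u) [AddCommGroup T] [Module R T],
    Module.Finite R T → HasFinitePd R T → Subsingleton (ExtGrp R i T M)

end


/- ===== Auxiliary material ===== -/

noncomputable section AuxExt

open LinearMap CategoryTheory Limits

variable {R : Type u} [CommRing R]

/-- Factor a linear map through a surjection whose kernel it kills. -/
private lemma factor_aux {A B K : Type u} [AddCommGroup A] [AddCommGroup B] [AddCommGroup K]
    [Module R A] [Module R B] [Module R K] (f : A →ₗ[R] B) (g : A →ₗ[R] K)
    (hf : Function.Surjective f) (h : ∀ x, f x = 0 → g x = 0) :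
    ∃ k : B →ₗ[R] K, ∀ x, k (f x) = g x := by
  have hle : LinearMap.ker f ≤ LinearMap.ker g := fun x hx => h x hx
  refine ⟨((LinearMap.ker f).liftQ g hle) ∘ₗ
    (f.quotKerEquivOfSurjective hf).symm.toLinearMap, fun x => ?_⟩
  have h1 : (f.quotKerEquivOfSurjective hf).symm (f x) = Submodule.Quotient.mk x := by
    rw [LinearEquiv.symm_apply_eq]
    rfl
  simp only [LinearMap.coe_comp, Function.comp_apply, LinearEquiv.coe_coe, h1]
  rw [Submodule.liftQ_apply]

/-- The extension property: every map into `K` from a submodule `S ≤ N` such that the quotient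
`N ⧸ S` has projective dimension at most `m` extends to `N`. -/
private def Solv (R : Type u) [CommRing R] (m : ℕ) (K : Type u) [AddCommGroup K] [Module R K] :
    Prop :=
  ∀ (N : Type u) [AddCommGroup N] [Module R N], ∀ S : Submodule R N,
    HasPdLE R (N ⧸ S) m → ∀ h : S →ₗ[R] K, ∃ H : N →ₗ[R] K, ∀ s : S, H s = h s

private lemma solv_of_equiv {K M : Type u} [AddCommGroup K] [Module R K]
    [AddCommGroup M] [Module R M] (m : ℕ) (eqv : M ≃ₗ[R] K) (hK : Solv R m K) :
    Solv R m M := by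
  intro N _ _ S hpd h
  obtain ⟨H, hH⟩ := hK N S hpd (eqv.toLinearMap ∘ₗ h)
  refine ⟨eqv.symm.toLinearMap ∘ₗ H, fun s => ?_⟩
  simp [hH s]

/-- Reduce an extension problem to extension of maps from the kernel of a projective cover
of the quotient. -/
private lemma extend_of_proj {N K Q : Type u} [AddCommGroup N] [Module R N]
    [AddCommGroup K] [Module R K] [AddCommGroup Q] [Module R Q]
    (S : Submodule R N) (h : S →ₗ[R] K) (e : Q →ₗ[R] (N ⧸ S)) (he : Function.Surjective e)
    (hQ : Module.Projective R Q)
    (hext : ∀ φ : ↥(LinearMap.ker e) →ₗ[R] K, ∃ Φ : Q →ₗ[R] K,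
      ∀ x : LinearMap.ker e, Φ x = φ x) :
    ∃ H : N →ₗ[R] K, ∀ s : S, H s = h s := by
  obtain ⟨θ, hθ⟩ := Module.projective_lifting_property S.mkQ e S.mkQ_surjective
  have hθfun : ∀ y, S.mkQ (θ y) = e y := fun y => LinearMap.congr_fun hθ y
  have hθS' : ∀ x : ↥(LinearMap.ker e), (θ ∘ₗ (LinearMap.ker e).subtype) x ∈ S := by
    intro x
    have hx : S.mkQ (θ x) = 0 := by
      rw [hθfun]; exact x.2
    rw [Submodule.mkQ_apply, Submodule.Quotient.mk_eq_zero] at hx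
    exact hx
  set θ' : ↥(LinearMap.ker e) →ₗ[R] S :=
    LinearMap.codRestrict S (θ ∘ₗ (LinearMap.ker e).subtype) hθS' with hθ'def
  obtain ⟨Φ, hΦ⟩ := hext (h ∘ₗ θ')
  set F : (S × Q) →ₗ[R] N :=
    S.subtype ∘ₗ LinearMap.fst R S Q + θ ∘ₗ LinearMap.snd R S Q with hFdef
  set G : (S × Q) →ₗ[R] K :=
    h ∘ₗ LinearMap.fst R S Q + Φ ∘ₗ LinearMap.snd R S Q with hGdef
  have hFapp : ∀ p : S × Q, F p = p.1.1 + θ p.2 := fun p => rfl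
  have hGapp : ∀ p : S × Q, G p = h p.1 + Φ p.2 := fun p => rfl
  have hF : Function.Surjective F := by
    intro x
    obtain ⟨y, hy⟩ := he (S.mkQ x)
    have hmem : x - θ y ∈ S := by
      have hx : S.mkQ (x - θ y) = 0 := by rw [map_sub, hθfun, hy, sub_self]
      rw [Submodule.mkQ_apply, Submodule.Quotient.mk_eq_zero] at hx
      exact hx
    refine ⟨(⟨x - θ y, hmem⟩, y), ?_⟩
    rw [hFapp]
    simp
  have hker : ∀ p : S × Q, F p = 0 → G p = 0 := by
    rintro ⟨s, y⟩ hp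
    rw [hFapp] at hp
    have hθy : θ y = -(s : N) := eq_neg_of_add_eq_zero_right hp
    have hy : y ∈ LinearMap.ker e := by
      rw [LinearMap.mem_ker, ← hθfun, hθy, map_neg]
      rw [show S.mkQ (s : N) = 0 from (Submodule.Quotient.mk_eq_zero S).mpr s.2]
      simp
    have h1 : Φ y = h (θ' ⟨y, hy⟩) := hΦ ⟨y, hy⟩
    have h2 : s + θ' ⟨y, hy⟩ = 0 := by
      apply Subtype.ext
      show (s : N) + θ y = 0
      exact hp
    rw [hGapp, h1, ← map_add, h2, map_zero]
  obtain ⟨H, hH⟩ := factor_aux F G hF hker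
  refine ⟨H, fun s => ?_⟩
  have hs := hH (s, 0)
  rw [hFapp, hGapp] at hs
  simpa using hs

/-- The key dimension-shifting lemma: kernels in a complete injective resolution satisfy
the extension property against quotients of finite projective dimension. -/
private lemma solv_ker (C : CompleteInjectiveResolution R) (m : ℕ) :
    ∀ b : ℤ, Solv R m ↥(LinearMap.ker (C.d b)) := by
  induction m with
  | zero =>
    intro b N _ _ S hpd h
    obtain ⟨Res⟩ := hpd
    letI := Res.acg
    letI := Res.mod
    refine extend_of_proj S h Res.e Res.e_surj (Res.prop 0 le_rfl) ?_
    intro φ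
    refine ⟨0, fun x => ?_⟩
    have hx0 : (x : Res.H 0) = 0 := by
      obtain ⟨y, hy⟩ := (Res.exact0 (x : Res.H 0)).mp (LinearMap.mem_ker.mp x.2)
      have : Subsingleton (Res.H 1) := Res.triv 1 Nat.one_pos
      rw [← hy, Subsingleton.elim y 0, map_zero]
    have hx : x = 0 := Subtype.ext hx0
    rw [hx]
    simp
  | succ m ih =>
    intro b
    obtain ⟨a, rfl⟩ : ∃ a, a + 1 = b := ⟨b - 1, by ring⟩
    intro N _ _ S hpd h
    obtain ⟨Res⟩ := hpd
    letI := Res.acg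
    letI := Res.mod
    refine extend_of_proj S h Res.e Res.e_surj (Res.prop 0 (Nat.zero_le _)) ?_
    intro φ
    letI := C.acg
    letI := C.mod
    -- the surjection `ρ : X a → ker (C.d (a+1))`
    have hmemρ : ∀ x : C.X a, C.d a x ∈ LinearMap.ker (C.d (a + 1)) := fun x =>
      LinearMap.mem_ker.mpr ((C.exact a).apply_apply_eq_zero x)
    set ρ : C.X a →ₗ[R] ↥(LinearMap.ker (C.d (a + 1))) :=
      LinearMap.codRestrict _ (C.d a) hmemρ with hρdef
    have hρ : Function.Surjective ρ := by
      intro y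
      obtain ⟨x, hx⟩ := ((C.exact a) (y : C.X (a + 1))).mp (LinearMap.mem_ker.mp y.2)
      exact ⟨x, Subtype.ext hx⟩
    -- the surjection `ebar : Res.H 1 → ker Res.e`
    have hmem2 : ∀ x, Res.d 0 x ∈ LinearMap.ker Res.e := fun x =>
      LinearMap.mem_ker.mpr ((Res.exact0).apply_apply_eq_zero x)
    set ebar : Res.H 1 →ₗ[R] ↥(LinearMap.ker Res.e) :=
      LinearMap.codRestrict _ (Res.d 0) hmem2 with hebardef
    have hebarsurj : Function.Surjective ebar := by
      intro y
      obtain ⟨x, hx⟩ := ((Res.exact0) (y : Res.H 0)).mp (LinearMap.mem_ker.mp y.2)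
      exact ⟨x, Subtype.ext hx⟩
    -- lift `φ ∘ ebar` along `ρ` using projectivity of `Res.H 1`
    haveI : Module.Projective R (Res.H 1) := Res.prop 1 (Nat.one_le_iff_ne_zero.mpr (by omega))
    obtain ⟨w, hw⟩ := Module.projective_lifting_property ρ (φ ∘ₗ ebar) hρ
    have hwfun : ∀ x, ρ (w x) = φ (ebar x) := fun x => LinearMap.congr_fun hw x
    have hwd : ∀ x, C.d a (w x) = ((φ (ebar x) : C.X (a + 1))) := fun x =>
      congrArg Subtype.val (hwfun x)
    -- the restriction of `w` to `ker (Res.d 0)` lands in `ker (C.d a)`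
    have hmemχ : ∀ x : ↥(LinearMap.ker (Res.d 0)),
        (w ∘ₗ (LinearMap.ker (Res.d 0)).subtype) x ∈ LinearMap.ker (C.d a) := by
      intro x
      have h1 : ebar (x : Res.H 1) = 0 := Subtype.ext (by simp [hebardef])
      rw [LinearMap.mem_ker]
      simp only [LinearMap.coe_comp, Function.comp_apply, Submodule.coe_subtype]
      rw [hwd, h1]
      simp
    set χ : ↥(LinearMap.ker (Res.d 0)) →ₗ[R] ↥(LinearMap.ker (C.d a)) :=
      LinearMap.codRestrict _ (w ∘ₗ (LinearMap.ker (Res.d 0)).subtype) hmemχ with hχdef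
    -- the quotient `Res.H 1 ⧸ ker (Res.d 0)` has projective dimension at most `m`
    have hpd' : HasPdLE R (Res.H 1 ⧸ LinearMap.ker (Res.d 0)) m := by
      refine ⟨⟨fun i => Res.H (i + 1), (LinearMap.ker (Res.d 0)).mkQ, fun i => Res.d (i + 1),
        Submodule.mkQ_surjective _, ?_, fun i => Res.exact (i + 1),
        fun i hi => Res.prop (i + 1) (by omega), fun i hi => Res.triv (i + 1) (by omega)⟩⟩
      rw [LinearMap.exact_iff, Submodule.ker_mkQ, LinearMap.exact_iff.mp (Res.exact 0)]
    -- use the inductive hypothesis to extend `χ` to all of `Res.H 1`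
    obtain ⟨W, hW⟩ := ih a (Res.H 1) (LinearMap.ker (Res.d 0)) hpd' χ
    set w' : Res.H 1 →ₗ[R] C.X a :=
      w - (LinearMap.ker (C.d a)).subtype ∘ₗ W with hw'def
    -- `w'` kills `ker ebar`, hence factors through `ker Res.e`
    obtain ⟨v, hv⟩ := factor_aux ebar w' hebarsurj (by
      intro x hx
      have hxker : x ∈ LinearMap.ker (Res.d 0) := by
        have h9 := congrArg Subtype.val hx
        simpa [hebardef] using h9
      have h2 : (W x : C.X a) = w x := by
        have h3 := hW ⟨x, hxker⟩
        have h4 := congrArg Subtype.val h3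
        simpa [hχdef] using h4
      show w x - (LinearMap.ker (C.d a)).subtype (W x) = 0
      simp [h2])
    -- extend `v` along the inclusion `ker Res.e ≤ Res.H 0` using injectivity of `C.X a`
    obtain ⟨V, hV⟩ := (C.injective a).out (LinearMap.ker Res.e).subtype
      (Submodule.injective_subtype _) v
    refine ⟨ρ ∘ₗ V, fun x => ?_⟩
    obtain ⟨y, hy⟩ := hebarsurj x
    have hWy : ρ ((LinearMap.ker (C.d a)).subtype (W y)) = 0 := by
      apply Subtype.ext
      simp [hρdef]
    calc (ρ ∘ₗ V) (x : Res.H 0) = ρ (V ((LinearMap.ker Res.e).subtype x)) := rfl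
      _ = ρ (v x) := by rw [hV]
      _ = ρ (v (ebar y)) := by rw [hy]
      _ = ρ (w' y) := by rw [hv]
      _ = ρ (w y) - ρ ((LinearMap.ker (C.d a)).subtype (W y)) := by
          rw [hw'def]; simp
      _ = φ (ebar y) := by rw [hWy, hwfun]; simp
      _ = φ x := by rw [hy]

/-- Subsingletons are projective modules. -/
private lemma proj_of_subsingleton (N : Type u) [AddCommGroup N] [Module R N]
    [Subsingleton N] : Module.Projective R N :=
  Module.Projective.of_free

variable {T : Type u} [AddCommGroup T] [Module R T] {n : ℕ}

/-- The chain complex in `ModuleCat R` underlying a finite projective resolution. -/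
private noncomputable def resComplex
    (L : LeftResolution R T (fun N _ _ => Module.Projective R N) n) :
    ChainComplex (ModuleCat.{u} R) ℕ :=
  letI := L.acg
  letI := L.mod
  ChainComplex.of (fun i => ModuleCat.of R (L.H i))
    (fun i => ModuleCat.ofHom (L.d i))
    (fun i => ModuleCat.hom_ext (LinearMap.ext fun x => (L.exact i).apply_apply_eq_zero x))

private lemma resComplex_d (L : LeftResolution R T (fun N _ _ => Module.Projective R N) n)
    (i : ℕ) :
    letI := L.acg
    letI := L.mod
    (resComplex L).d (i + 1) i =
      ModuleCat.ofHom (L.d i) := by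
  letI := L.acg
  letI := L.mod
  show (resComplex L).d (i + 1) i = ModuleCat.ofHom (L.d i)
  exact ChainComplex.of_d (fun i => ModuleCat.of R (L.H i)) (fun i => ModuleCat.ofHom (L.d i)) i

/-- The projective resolution of `T` in `ModuleCat R` associated with a `LeftResolution`. -/
private noncomputable def resOf
    (L : LeftResolution R T (fun N _ _ => Module.Projective R N) n) :
    CategoryTheory.ProjectiveResolution (ModuleCat.of R T) := by
  letI := L.acg
  letI := L.mod
  refine
    { complex := resComplex L
      projective := fun i => ?_
      π := (ChainComplex.toSingle₀Equiv _ _).symm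
        ⟨ModuleCat.ofHom L.e, ?_⟩
      quasiIso := ?_ }
  · haveI : Module.Projective R (L.H i) := by
      by_cases hi : i ≤ n
      · exact L.prop i hi
      · haveI := L.triv i (by omega)
        exact proj_of_subsingleton _
    exact (IsProjective.iff_projective (L.H i)).mp ‹_›
  · rw [resComplex_d]
    exact ModuleCat.hom_ext (LinearMap.ext fun x => (L.exact0).apply_apply_eq_zero x)
  · constructor
    intro i
    cases i with
    | zero =>
      rw [ChainComplex.quasiIsoAt₀_iff, ShortComplex.quasiIso_iff_of_zeros']
      rotate_left
      · exact (resComplex L).shape 0 0 (by simp)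
      · rfl
      · rfl
      constructor
      · rw [ShortComplex.moduleCat_exact_iff]
        intro (x : L.H 0) hx
        have hx' : L.e x = 0 := by
          exact hx
        obtain ⟨y, hy⟩ := (L.exact0 x).mp hx'
        refine ⟨y, ?_⟩
        show ((resComplex L).d 1 0).hom y = x
        rw [resComplex_d]
        exact hy
      · rw [ModuleCat.epi_iff_surjective]
        intro x
        obtain ⟨y, hy⟩ := L.e_surj x
        exact ⟨y, hy⟩
    | succ i =>
      rw [quasiIsoAt_iff_exactAt']
      · rw [HomologicalComplex.exactAt_iff' _ (i + 2) (i + 1) i (by simp) (by simp)]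
        rw [ShortComplex.moduleCat_exact_iff]
        intro x hx
        change L.H (i + 1) at x
        have hx' : L.d i x = 0 := by
          have h5 := hx
          rw [show ((resComplex L).sc' (i + 2) (i + 1) i).g = (resComplex L).d (i + 1) i
            from rfl, resComplex_d] at h5
          exact h5
        obtain ⟨y, hy⟩ := (L.exact i x).mp hx'
        refine ⟨y, ?_⟩
        show ((resComplex L).d (i + 2) (i + 1)).hom y = x
        rw [resComplex_d]
        exact hy
      · exact ChainComplex.exactAt_succ_single_obj _ _

private lemma subsingleton_of_isZero {X : ModuleCat.{u} R} (h : IsZero X) :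
    Subsingleton X := by
  constructor
  intro a b
  have h1 : (𝟙 X : X ⟶ X) = 0 := h.eq_of_src _ _
  have ha := LinearMap.congr_fun (congrArg ModuleCat.Hom.hom h1) a
  have hb := LinearMap.congr_fun (congrArg ModuleCat.Hom.hom h1) b
  simpa using ha.trans hb.symm

end AuxExt

/-- If `R` is commutative Noetherian, `M` is Gorenstein injective, and `T` is a
finitely generated `R`-module of finite projective dimension, then `Ext^i_R(T, M) = 0` for all
`i > 0`. -/
theorem gorensteinInjective_ext_vanishing_of_finite_pd
    (R : Type u) [CommRing R] [IsNoetherianRing R]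
    (M : Type u) [AddCommGroup M] [Module R M]
    (hM : IsGorensteinInjective R M)
    (T : Type u) [AddCommGroup T] [Module R T]
    (hTfg : Module.Finite R T) (hTpd : HasFinitePd R T) :
    ∀ i : ℕ, 0 < i → Subsingleton (ExtGrp R i T M) := by
  intro i hi
  obtain ⟨p, rfl⟩ : ∃ p, i = p + 1 := ⟨i - 1, by omega⟩
  obtain ⟨n, ⟨L⟩⟩ := hTpd
  letI := L.acg
  letI := L.mod
  obtain ⟨C, ⟨eqv⟩⟩ := hM
  letI := C.acg
  letI := C.mod
  have hsolv : Solv R n M := solv_of_equiv n eqv (solv_ker C n 0)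
  set P := resOf L with hPdef
  have hzero : CategoryTheory.Limits.IsZero
      ((P.complex.linearYonedaObj R (ModuleCat.of R M)).homology (p + 1)) := by
    rw [← HomologicalComplex.exactAt_iff_isZero_homology]
    rw [HomologicalComplex.exactAt_iff' _ p (p + 1) (p + 2) (by simp) (by simp)]
    rw [CategoryTheory.ShortComplex.moduleCat_exact_iff]
    intro f hf
    have hd2 : P.complex.d (p + 2) (p + 1) =
        ModuleCat.ofHom (L.d (p + 1)) :=
      resComplex_d L (p + 1)
    have hd1 : P.complex.d (p + 1) p =
        ModuleCat.ofHom (L.d p) :=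
      resComplex_d L p
    let f' : P.complex.X (p + 1) ⟶ ModuleCat.of R M := f
    have hf' : P.complex.d (p + 2) (p + 1) ≫ f' = 0 := hf
    rw [hd2] at hf'
    have hfd : ∀ x : L.H (p + 2), f'.hom (L.d (p + 1) x) = 0 := by
      intro x
      have h0 := DFunLike.congr_fun (congrArg ModuleCat.Hom.hom hf') x
      exact h0
    set S : Submodule R (L.H p) := LinearMap.range (L.d p) with hSdef
    set dcor : L.H (p + 1) →ₗ[R] S :=
      LinearMap.codRestrict S (L.d p) (fun x => LinearMap.mem_range_self _ x) with hdcordef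
    have hdcorsurj : Function.Surjective dcor := by
      rintro ⟨y, ⟨x, rfl⟩⟩
      exact ⟨x, rfl⟩
    obtain ⟨h0, hh0⟩ := factor_aux dcor f'.hom hdcorsurj (by
      intro x hx
      have hx' : L.d p x = 0 := congrArg Subtype.val hx
      obtain ⟨y, hy⟩ := (L.exact p x).mp hx'
      rw [← hy]
      exact hfd y)
    have hpd2 : HasPdLE R (L.H p ⧸ S) n := by
      refine ⟨⟨fun j => L.H (p + j), S.mkQ, fun j => L.d (p + j), Submodule.mkQ_surjective _, ?_,
        fun j => L.exact (p + j), fun j hj => ?_, fun j hj => L.triv (p + j) (by omega)⟩⟩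
      · rw [LinearMap.exact_iff, Submodule.ker_mkQ]
        rfl
      · by_cases hpj : p + j ≤ n
        · exact L.prop _ hpj
        · haveI := L.triv (p + j) (by omega)
          exact proj_of_subsingleton _
    obtain ⟨H, hH⟩ := hsolv (L.H p) S hpd2 h0
    refine ⟨ModuleCat.ofHom H, ?_⟩
    show (P.complex.d (p + 1) p ≫ ModuleCat.ofHom H
      : P.complex.X (p + 1) ⟶ ModuleCat.of R M) = f'
    rw [hd1]
    apply ModuleCat.hom_ext
    apply LinearMap.ext
    intro x
    show H (L.d p x) = f'.hom x
    exact (hH (dcor x)).trans (hh0 x)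
  exact subsingleton_of_isZero
    (CategoryTheory.Limits.IsZero.of_iso hzero (P.isoExt (p + 1) (ModuleCat.of R M)))
end

section
/- Let R be a commutative Noetherian ring and M an R-module with Gorenstein injective dimension n ≥ 0 (i.e., there is an exact sequence 0 → M → H^0 → H^1 → ⋯ → H^n → 0 with each H^i Gorenstein injective, and n minimal). Then for every finitely generated R-module T of finite projective dimension and every i > n, Ext^i_R(T, M) = 0. -/
universe u
open CategoryTheory
-- ===== auxiliary development =====


open CategoryTheory Limits

noncomputable section
namespace GidAux

variable {R : Type u} [CommRing R]

lemma subsingleton_of_isZero {M : ModuleCat.{u} R} (h : IsZero M) : Subsingleton M := by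
  refine ⟨fun a b => ?_⟩
  have h1 : (𝟙 M : M ⟶ M) = 0 := h.eq_of_src _ _
  have := fun x : M => congrArg (fun φ : M ⟶ M => φ x) h1
  simpa using (this a).trans (this b).symm

instance subsingleton_linearMap_src {A B : Type u} [AddCommGroup A] [Module R A]
    [AddCommGroup B] [Module R B] [Subsingleton A] : Subsingleton (A →ₗ[R] B) :=
  ⟨fun φ ψ => by ext x; rw [Subsingleton.elim x 0]; simp⟩

instance subsingleton_linearMap_tgt {A B : Type u} [AddCommGroup A] [Module R A]
    [AddCommGroup B] [Module R B] [Subsingleton B] : Subsingleton (A →ₗ[R] B) :=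
  ⟨fun φ ψ => by ext x; exact Subsingleton.elim _ _⟩

section HomCplx

variable (P : ChainComplex (ModuleCat.{u} R) ℕ)

/-- The cochain complex `Hom(P, N)`. -/
abbrev homCplx (N : Type u) [AddCommGroup N] [Module R N] : CochainComplex (ModuleCat.{u} R) ℕ :=
  P.linearYonedaObj R (ModuleCat.of R N)

/-- Postcomposition map of hom complexes. -/
def homMap {N N' : Type u} [AddCommGroup N] [Module R N] [AddCommGroup N'] [Module R N']
    (f : N →ₗ[R] N') : homCplx P N ⟶ homCplx P N' where
  f i := ModuleCat.ofHom (Linear.rightComp R (P.X i) (ModuleCat.ofHom f))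
  comm' i j hij := by
    ext φ
    rfl

lemma homMap_apply {N N' : Type u} [AddCommGroup N] [Module R N] [AddCommGroup N'] [Module R N']
    (f : N →ₗ[R] N') (i : ℕ) (φ : (homCplx P N).X i) :
    (homMap P f).f i φ = φ ≫ ModuleCat.ofHom f := rfl

/-- IsZero of homology in a fixed degree. -/
def ZeroH (N : Type u) [AddCommGroup N] [Module R N] (i : ℕ) : Prop :=
  IsZero ((homCplx P N).homology i)

lemma zeroH_of_subsingleton_X (i : ℕ) (hi : Subsingleton (P.X i))
    (N : Type u) [AddCommGroup N] [Module R N] : ZeroH P N i := by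
  rw [ZeroH, ← HomologicalComplex.exactAt_iff_isZero_homology]
  rw [HomologicalComplex.exactAt_iff]
  apply ShortComplex.exact_of_isZero_X₂
  haveI : Subsingleton ((homCplx P N).X i) :=
    ⟨fun a b => ModuleCat.hom_ext
      (@Subsingleton.elim _ (@GidAux.subsingleton_linearMap_src R _ (P.X i) N _ _ _ _ hi) _ _)⟩
  exact ModuleCat.isZero_of_subsingleton ((homCplx P N).X i)

lemma zeroH_of_subsingleton (N : Type u) [AddCommGroup N] [Module R N]
    [Subsingleton N] (i : ℕ) : ZeroH P N i := by
  rw [ZeroH, ← HomologicalComplex.exactAt_iff_isZero_homology]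
  rw [HomologicalComplex.exactAt_iff]
  apply ShortComplex.exact_of_isZero_X₂
  haveI : Subsingleton ((homCplx P N).X i) :=
    ⟨fun a b => ModuleCat.hom_ext
      (@Subsingleton.elim _ (@GidAux.subsingleton_linearMap_tgt R _ (P.X i) N _ _ _ _ _) _ _)⟩
  exact ModuleCat.isZero_of_subsingleton ((homCplx P N).X i)

lemma hom_exact_of_injective {A B C E : Type u} [AddCommGroup A] [Module R A]
    [AddCommGroup B] [Module R B] [AddCommGroup C] [Module R C]
    [AddCommGroup E] [Module R E]
    (u : A →ₗ[R] B) (v : B →ₗ[R] C) (huv : Function.Exact u v)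
    (hE : Module.Injective R E) (φ : B →ₗ[R] E) (hφ : φ ∘ₗ u = 0) :
    ∃ ψ : C →ₗ[R] E, ψ ∘ₗ v = φ := by
  have hK : LinearMap.ker v ≤ LinearMap.ker φ := by
    intro x hx
    obtain ⟨a, rfl⟩ := (huv x).mp hx
    simpa using congrArg (fun m => m a) hφ
  let φ' : (B ⧸ LinearMap.ker v) →ₗ[R] E := Submodule.liftQ _ φ hK
  let e : (B ⧸ LinearMap.ker v) ≃ₗ[R] LinearMap.range v := v.quotKerEquivRange
  let θ : LinearMap.range v →ₗ[R] E := φ' ∘ₗ (e.symm : LinearMap.range v →ₗ[R] _)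
  obtain ⟨ψ, hψ⟩ := hE.out (LinearMap.range v).subtype (Submodule.injective_subtype _) θ
  refine ⟨ψ, ?_⟩
  ext b
  have h1 : ψ (v b) = θ ⟨v b, ⟨b, rfl⟩⟩ := hψ ⟨v b, ⟨b, rfl⟩⟩
  have h2 : e (Submodule.Quotient.mk b) = ⟨v b, ⟨b, rfl⟩⟩ := by
    apply Subtype.ext
    simp [e, LinearMap.quotKerEquivRange]
  have h3 : θ ⟨v b, ⟨b, rfl⟩⟩ = φ' (Submodule.Quotient.mk b) := by
    rw [← h2]
    simp [θ]
  simp only [LinearMap.comp_apply, h1, h3]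
  simp [φ']

section HomCplxExact

variable (P : ChainComplex (ModuleCat.{u} R) ℕ)

lemma zeroH_of_injective (j : ℕ)
    (hP : Function.Exact (P.d (j + 2) (j + 1)) (P.d (j + 1) j))
    (E : Type u) [AddCommGroup E] [Module R E] (hE : Module.Injective R E) :
    ZeroH P E (j + 1) := by
  rw [ZeroH, ← HomologicalComplex.exactAt_iff_isZero_homology]
  rw [HomologicalComplex.exactAt_iff' _ j (j + 1) (j + 2) (by simp) (by simp)]
  rw [ShortComplex.moduleCat_exact_iff]
  intro ψ hψ
  have hcomp : (ψ : P.X (j + 1) ⟶ ModuleCat.of R E).hom ∘ₗ (P.d (j + 2) (j + 1)).hom = 0 := by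
    have : (homCplx P E).d (j + 1) (j + 2) ψ = 0 := hψ
    have h2 : P.d (j + 2) (j + 1) ≫ (ψ : P.X (j + 1) ⟶ ModuleCat.of R E) = 0 := this
    exact congrArg ModuleCat.Hom.hom h2
  obtain ⟨χ, hχ⟩ := hom_exact_of_injective (P.d (j + 2) (j + 1)).hom (P.d (j + 1) j).hom hP hE
    (ψ : P.X (j + 1) ⟶ ModuleCat.of R E).hom hcomp
  refine ⟨ModuleCat.ofHom χ, ?_⟩
  show P.d (j + 1) j ≫ ModuleCat.ofHom χ = ψ
  exact ModuleCat.hom_ext hχ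

end HomCplxExact

section LES

variable (P : ChainComplex (ModuleCat.{u} R) ℕ) (hproj : ∀ i, Projective (P.X i))
variable {A B C : Type u} [AddCommGroup A] [Module R A] [AddCommGroup B] [Module R B]
  [AddCommGroup C] [Module R C]
variable (f : A →ₗ[R] B) (g : B →ₗ[R] C)
variable (hf : Function.Injective f) (hfg : Function.Exact f g) (hg : Function.Surjective g)

/-- The short complex of hom complexes. -/
def homSES (hfg : Function.Exact f g) : ShortComplex (CochainComplex (ModuleCat.{u} R) ℕ) :=
  ShortComplex.mk (homMap P f) (homMap P g) (by
    ext i φ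
    exact ModuleCat.hom_ext (LinearMap.ext fun x => hfg.apply_apply_eq_zero _))

lemma homSES_shortExact (hproj : ∀ i, Projective (P.X i))
    (hf : Function.Injective f) (hg : Function.Surjective g) :
    (homSES P f g hfg).ShortExact := by
  apply HomologicalComplex.shortExact_of_degreewise_shortExact
  intro i
  refine { exact := ?_, mono_f := ?_, epi_g := ?_ }
  · rw [ShortComplex.moduleCat_exact_iff]
    intro ψ hψ
    let ψ' : P.X i ⟶ ModuleCat.of R B := ψ
    have hψ'' : ψ' ≫ ModuleCat.ofHom g = 0 := hψ
    have hψ' : g ∘ₗ ψ'.hom = 0 := congrArg ModuleCat.Hom.hom hψ''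
    have hmem : ∀ x : P.X i, ψ' x ∈ LinearMap.ker g := by
      intro x
      have h := congrArg (fun m : P.X i →ₗ[R] C => m x) hψ'
      simpa using h
    let eA : A ≃ₗ[R] LinearMap.ker g :=
      (LinearEquiv.ofInjective f hf).trans (LinearEquiv.ofEq _ _ hfg.linearMap_ker_eq.symm)
    have key : ∀ y : LinearMap.ker g, f (eA.symm y) = (y : B) := by
      intro y
      have h2 : ((eA (eA.symm y) : LinearMap.ker g) : B) = (y : B) := by
        rw [eA.apply_symm_apply]
      exact h2
    refine ⟨ModuleCat.ofHom ((eA.symm : LinearMap.ker g →ₗ[R] A) ∘ₗ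
      (LinearMap.codRestrict (LinearMap.ker g) ψ'.hom hmem)), ?_⟩
    show ModuleCat.ofHom ((eA.symm : LinearMap.ker g →ₗ[R] A) ∘ₗ
      (LinearMap.codRestrict (LinearMap.ker g) ψ'.hom hmem)) ≫ ModuleCat.ofHom f = ψ'
    ext x
    exact key ⟨ψ' x, hmem x⟩
  · rw [ModuleCat.mono_iff_injective]
    intro φ₁ φ₂ h
    have h' : (φ₁ : P.X i ⟶ ModuleCat.of R A) ≫ ModuleCat.ofHom f =
        (φ₂ : P.X i ⟶ ModuleCat.of R A) ≫ ModuleCat.ofHom f := h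
    show (φ₁ : P.X i ⟶ ModuleCat.of R A) = φ₂
    exact ModuleCat.hom_ext
      (LinearMap.ext fun x => hf (congrArg (fun m : P.X i ⟶ ModuleCat.of R B => m x) h'))
  · rw [ModuleCat.epi_iff_surjective]
    intro ψ
    let ψ' : P.X i ⟶ ModuleCat.of R C := ψ
    haveI : Projective (P.X i) := hproj i
    haveI : Epi (ModuleCat.ofHom g : ModuleCat.of R B ⟶ ModuleCat.of R C) :=
      (ModuleCat.epi_iff_surjective _).mpr hg
    exact ⟨Projective.factorThru ψ' (ModuleCat.ofHom g),
      Projective.factorThru_comp ψ' (ModuleCat.ofHom g)⟩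

end LES

section LES2
variable (P : ChainComplex (ModuleCat.{u} R) ℕ)
variable {A B C : Type u} [AddCommGroup A] [Module R A] [AddCommGroup B] [Module R B]
  [AddCommGroup C] [Module R C]

lemma zeroH_A (hproj : ∀ i, Projective (P.X i))
    (f : A →ₗ[R] B) (g : B →ₗ[R] C)
    (hf : Function.Injective f) (hfg : Function.Exact f g) (hg : Function.Surjective g)
    (i : ℕ) (h1 : ZeroH P C i) (h2 : ZeroH P B (i + 1)) : ZeroH P A (i + 1) := by
  have hS := homSES_shortExact P f g hfg hproj hf hg
  have hex := hS.homology_exact₁ i (i + 1) rfl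
  exact hex.isZero_X₂ ((h1.eq_of_src _ _ : _)) (h2.eq_of_tgt _ _)

lemma zeroH_C (hproj : ∀ i, Projective (P.X i))
    (f : A →ₗ[R] B) (g : B →ₗ[R] C)
    (hf : Function.Injective f) (hfg : Function.Exact f g) (hg : Function.Surjective g)
    (i : ℕ) (h1 : ZeroH P B i) (h2 : ZeroH P A (i + 1)) : ZeroH P C i := by
  have hS := homSES_shortExact P f g hfg hproj hf hg
  have hex := hS.homology_exact₃ i (i + 1) rfl
  exact hex.isZero_X₂ ((h1.eq_of_src _ _ : _)) (h2.eq_of_tgt _ _)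

end LES2

section Equiv

variable (P : ChainComplex (ModuleCat.{u} R) ℕ)

/-- Iso of hom complexes induced by a linear equiv. -/
def homCplxIso {N N' : Type u} [AddCommGroup N] [Module R N] [AddCommGroup N'] [Module R N']
    (e : N ≃ₗ[R] N') : homCplx P N ≅ homCplx P N' where
  hom := homMap P e.toLinearMap
  inv := homMap P e.symm.toLinearMap
  hom_inv_id := by
    ext i φ
    exact ModuleCat.hom_ext (LinearMap.ext fun x => e.symm_apply_apply _)
  inv_hom_id := by
    ext i φ
    exact ModuleCat.hom_ext (LinearMap.ext fun x => e.apply_symm_apply _)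

lemma zeroH_of_equiv {N N' : Type u} [AddCommGroup N] [Module R N] [AddCommGroup N'] [Module R N']
    (e : N ≃ₗ[R] N') (i : ℕ) (h : ZeroH P N i) : ZeroH P N' i :=
  h.of_iso ((HomologicalComplex.homologyFunctor (ModuleCat.{u} R) _ i).mapIso
    (homCplxIso P e)).symm

end Equiv

section Res

variable {T : Type u} [AddCommGroup T] [Module R T] {dd : ℕ}
variable (L : LeftResolution R T (fun N _ _ => Module.Projective R N) dd)

/-- The chain complex underlying a left resolution. -/
def resCplx : ChainComplex (ModuleCat.{u} R) ℕ :=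
  ChainComplex.of (fun i => ModuleCat.of R (L.H i)) (fun i => ModuleCat.ofHom (L.d i))
    (fun i => ModuleCat.hom_ext (LinearMap.ext fun x => (L.exact i).apply_apply_eq_zero x))

lemma resCplx_d (i : ℕ) : (resCplx L).d (i + 1) i = ModuleCat.ofHom (L.d i) :=
  ChainComplex.of_d (fun i => ModuleCat.of R (L.H i)) (fun i => ModuleCat.ofHom (L.d i)) i

lemma resCplx_projective (i : ℕ) : Projective ((resCplx L).X i) := by
  by_cases h : i ≤ dd
  · exact (IsProjective.iff_projective.{u, u} (L.H i)).mp (L.prop i h)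
  · have hz : IsZero ((resCplx L).X i) :=
      @ModuleCat.isZero_of_subsingleton R _ (ModuleCat.of R (L.H i)) (L.triv i (by omega))
    exact ⟨fun φ e he => ⟨0, by rw [Limits.zero_comp, hz.eq_of_src φ 0]⟩⟩

lemma resCplx_exactAt_succ (i : ℕ) : (resCplx L).ExactAt (i + 1) := by
  rw [HomologicalComplex.exactAt_iff' _ (i + 1 + 1) (i + 1) i (by simp) (by simp)]
  rw [ShortComplex.moduleCat_exact_iff]
  intro x hx
  have hx' : L.d i ((x : L.H (i + 1))) = 0 := by
    have : (resCplx L).d (i + 1) i x = 0 := hx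
    rwa [resCplx_d] at this
  obtain ⟨y, hy⟩ := ((L.exact i) _).mp hx'
  refine ⟨y, ?_⟩
  show (resCplx L).d (i + 1 + 1) (i + 1) y = x
  rw [resCplx_d]
  exact hy

lemma resCplx_d10_e : (resCplx L).d 1 0 ≫ ModuleCat.ofHom L.e = 0 := by
  rw [resCplx_d]
  exact ModuleCat.hom_ext (LinearMap.ext fun x => L.exact0.apply_apply_eq_zero x)

/-- The augmentation map. -/
def resπ : resCplx L ⟶ (ChainComplex.single₀ (ModuleCat.{u} R)).obj (ModuleCat.of R T) :=
  (ChainComplex.toSingle₀Equiv _ _).symm ⟨ModuleCat.ofHom L.e, resCplx_d10_e L⟩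

lemma resπ_f_zero : (resπ L).f 0 = ModuleCat.ofHom L.e :=
  ChainComplex.toSingle₀Equiv_symm_apply_f_zero _ _

/-- The projective resolution obtained from a finite left resolution. -/
def resOfLeftResolution : ProjectiveResolution (ModuleCat.of R T) where
  complex := resCplx L
  projective := resCplx_projective L
  π := resπ L
  quasiIso := ⟨fun n => by
    cases n with
    | zero =>
      rw [ChainComplex.quasiIsoAt₀_iff, ShortComplex.quasiIso_iff_of_zeros']
      rotate_left
      · rfl
      · rfl
      · rfl
      have hτ : ((HomologicalComplex.shortComplexFunctor' (ModuleCat.{u} R)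
          (ComplexShape.down ℕ) 1 0 0).map (resπ L)).τ₂ = ModuleCat.ofHom L.e := resπ_f_zero L
      constructor
      · rw [ShortComplex.moduleCat_exact_iff]
        intro x hx
        have hx' : L.e (x : L.H 0) = 0 := by
          have h2 := hx
          rw [show (ShortComplex.mk ((resCplx L).sc' 1 0 0).f
            ((HomologicalComplex.shortComplexFunctor' (ModuleCat.{u} R)
              (ComplexShape.down ℕ) 1 0 0).map (resπ L)).τ₂ (by
                rw [hτ]
                exact resCplx_d10_e L)).g = ModuleCat.ofHom L.e from hτ] at h2
          exact h2
        obtain ⟨y, hy⟩ := (L.exact0 _).mp hx'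
        refine ⟨y, ?_⟩
        show (resCplx L).d 1 0 y = x
        rw [resCplx_d]
        exact hy
      · rw [hτ]
        exact (ModuleCat.epi_iff_surjective _).mpr L.e_surj
    | succ n =>
      rw [quasiIsoAt_iff_exactAt']
      · exact resCplx_exactAt_succ L n
      · apply ChainComplex.exactAt_succ_single_obj⟩

end Res

section Main

variable {T : Type u} [AddCommGroup T] [Module R T] {dd : ℕ}
variable (L : LeftResolution R T (fun N _ _ => Module.Projective R N) dd)

lemma vanish_gt (N : Type u) [AddCommGroup N] [Module R N] (i : ℕ) (hi : dd < i) :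
    ZeroH (resCplx L) N i :=
  zeroH_of_subsingleton_X (resCplx L) i (L.triv i hi) N

lemma resCplx_exact_fun (j : ℕ) :
    Function.Exact ((resCplx L).d (j + 2) (j + 1)) ((resCplx L).d (j + 1) j) := by
  simp only [resCplx_d]
  exact L.exact j

lemma vanish_injective (E : Type u) [AddCommGroup E] [Module R E]
    (hE : Module.Injective R E) (i : ℕ) (hi : 1 ≤ i) : ZeroH (resCplx L) E i := by
  obtain ⟨j, rfl⟩ : ∃ j, i = j + 1 := ⟨i - 1, by omega⟩
  exact zeroH_of_injective (resCplx L) j (resCplx_exact_fun L j) E hE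

lemma vanish_GI (G : Type u) [AddCommGroup G] [Module R G]
    (hG : IsGorensteinInjective R G) (i : ℕ) (hi : 1 ≤ i) : ZeroH (resCplx L) G i := by
  obtain ⟨Cr, ⟨e⟩⟩ := hG
  have claim : ∀ (m i : ℕ) (j : ℤ), 1 ≤ i → dd < i + m →
      ZeroH (resCplx L) (LinearMap.ker (Cr.d j)) i := by
    intro m
    induction m with
    | zero =>
      intro i j hi hd
      exact vanish_gt L _ i (by omega)
    | succ m ih =>
      intro i j hi hd
      obtain ⟨a, rfl⟩ : ∃ a, j = a + 1 := ⟨j - 1, by ring⟩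
      set A := LinearMap.ker (Cr.d a)
      let f : A →ₗ[R] Cr.X a := (LinearMap.ker (Cr.d a)).subtype
      let g : Cr.X a →ₗ[R] LinearMap.ker (Cr.d (a + 1)) :=
        LinearMap.codRestrict _ (Cr.d a) (fun x => (Cr.exact a).apply_apply_eq_zero x)
      have hf : Function.Injective f := Submodule.injective_subtype _
      have hfg : Function.Exact f g := by
        intro y
        constructor
        · intro hy
          have hy' : Cr.d a y = 0 := congrArg Subtype.val hy
          exact ⟨⟨y, hy'⟩, rfl⟩
        · rintro ⟨⟨x, hx⟩, rfl⟩
          exact Subtype.ext hx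
      have hg : Function.Surjective g := by
        rintro ⟨y, hy⟩
        obtain ⟨x, hx⟩ := ((Cr.exact a) y).mp hy
        exact ⟨x, Subtype.ext hx⟩
      exact zeroH_C (resCplx L) (resCplx_projective L) f g hf hfg hg i
        (vanish_injective L (Cr.X a) (Cr.injective a) i hi)
        (ih (i + 1) a (by omega) (by omega))
  exact zeroH_of_equiv (resCplx L) e.symm i (claim (dd + 1) i 0 hi (by omega))

lemma vanish_main {M : Type u} [AddCommGroup M] [Module R M] {n : ℕ}
    (W : RightResolution R M (fun N _ _ => IsGorensteinInjective R N) n)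
    (i : ℕ) (hi : n < i) : ZeroH (resCplx L) M i := by
  have subsing : ∀ k : ℕ, n ≤ k → Subsingleton (LinearMap.range (W.d k)) := by
    intro k hk
    haveI : Subsingleton (W.H (k + 1)) := W.triv (k + 1) (by omega)
    exact ⟨fun a b => Subtype.ext (Subsingleton.elim _ _)⟩
  have claim : ∀ (i k : ℕ), 1 ≤ i → n ≤ i + k → ZeroH (resCplx L) (LinearMap.range (W.d k)) i := by
    intro i
    induction i with
    | zero => intro k h; omega
    | succ i ih =>
      intro k _ hnk
      by_cases hk : n ≤ k
      · haveI := subsing k hk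
        exact zeroH_of_subsingleton (resCplx L) _ _
      · push_neg at hk
        let f : LinearMap.range (W.d k) →ₗ[R] W.H (k + 1) := (LinearMap.range (W.d k)).subtype
        let g : W.H (k + 1) →ₗ[R] LinearMap.range (W.d (k + 1)) := (W.d (k + 1)).rangeRestrict
        have hf : Function.Injective f := Submodule.injective_subtype _
        have hfg : Function.Exact f g := by
          intro y
          constructor
          · intro hy
            have hy' : W.d (k + 1) y = 0 := congrArg Subtype.val hy
            have : y ∈ LinearMap.range (W.d k) := ((W.exact k) y).mp hy'
            exact ⟨⟨y, this⟩, rfl⟩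
          · rintro ⟨⟨x, hx⟩, rfl⟩
            exact Subtype.ext (((W.exact k) x).mpr hx)
        have hg : Function.Surjective g := LinearMap.surjective_rangeRestrict _
        have h2 : ZeroH (resCplx L) (LinearMap.range (W.d (k + 1))) i := by
          rcases Nat.eq_zero_or_pos i with hi0 | hi0
          · haveI := subsing (k + 1) (by omega)
            subst hi0
            exact zeroH_of_subsingleton (resCplx L) _ _
          · exact ih (k + 1) hi0 (by omega)
        exact zeroH_A (resCplx L) (resCplx_projective L) f g hf hfg hg i h2
          (vanish_GI L (W.H (k + 1)) (W.prop (k + 1) (by omega)) (i + 1) (by omega))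
  obtain ⟨i', rfl⟩ : ∃ i', i = i' + 1 := ⟨i - 1, by omega⟩
  let f : M →ₗ[R] W.H 0 := W.e
  let g : W.H 0 →ₗ[R] LinearMap.range (W.d 0) := (W.d 0).rangeRestrict
  have hf : Function.Injective f := W.e_inj
  have hfg : Function.Exact f g := by
    intro y
    constructor
    · intro hy
      have hy' : W.d 0 y = 0 := congrArg Subtype.val hy
      exact (W.exact0 y).mp hy'
    · rintro ⟨x, rfl⟩
      exact Subtype.ext ((W.exact0 (W.e x)).mpr ⟨x, rfl⟩)
  have hg : Function.Surjective g := LinearMap.surjective_rangeRestrict _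
  have h2 : ZeroH (resCplx L) (LinearMap.range (W.d 0)) i' := by
    rcases Nat.eq_zero_or_pos i' with hi0 | hi0
    · haveI := subsing 0 (by omega)
      subst hi0
      exact zeroH_of_subsingleton (resCplx L) _ _
    · exact claim i' 0 hi0 (by omega)
  exact zeroH_A (resCplx L) (resCplx_projective L) f g hf hfg hg i' h2
    (vanish_GI L (W.H 0) (W.prop 0 (Nat.zero_le n)) (i' + 1) (by omega))

end Main

end HomCplx

end GidAux
end


/-- If `M` has Gorenstein injective dimension `n`, then for every finitely
generated `R`-module `T` of finite projective dimension and every `i > n`,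
`Ext^i_R(T, M) = 0`. -/
theorem ext_vanishing_of_gid
    (R : Type u) [CommRing R] [IsNoetherianRing R]
    (M : Type u) [AddCommGroup M] [Module R M]
    (n : ℕ) (hM : HasGidEq R M n) :
    ∀ (T : Type u) [AddCommGroup T] [Module R T], Module.Finite R T → HasFinitePd R T →
      ∀ i : ℕ, n < i → Subsingleton (ExtGrp R i T M) := by
  intro T _ _ _ hpd i hi
  obtain ⟨dd, ⟨L⟩⟩ := hpd
  obtain ⟨⟨W⟩, -⟩ := hM
  have hz := GidAux.vanish_main L W i hi
  have iso := (GidAux.resOfLeftResolution L).isoExt (R := R) i (ModuleCat.of R M)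
  exact GidAux.subsingleton_of_isZero (hz.of_iso iso)
end
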